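/- Compactness of the set of pure almost-iid density matrices: Let K be a finite-dimensional complex Hilbert space and ℓ, r ∈ ℕ with r ≤ ℓ. For a unit vector θ ∈ K, define Sym^ℓ(K, θ^{⊗(ℓ−r)}) := Sym^ℓ(K) ∩ span V(K^{⊗ℓ}, θ^{⊗(ℓ−r)}), where Sym^ℓ(K) is the symmetric subspace of K^{⊗ℓ}. Then the set B^ℓ_r := { |Ψ⟩⟨Ψ| : there exists a unit vector θ ∈ K such that Ψ is a unit vector in Sym^ℓ(K, θ^{⊗(ℓ−r)}) } is a compact subset of the space of operators on K^{⊗ℓ}. -/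

import Mathlib

/-!
Fix a set `S` of `ℓ - r` tensor factors. Relabelling the factors shows that the symmetric vectors
in `span V(θ^{⊗(ℓ-r)})` are exactly the symmetrizations `Φ_θ Ω` of `θ^{⊗S} ⊗ Ω` with `Ω`
symmetric on the remaining factors. For `θ ≠ 0` the map `Φ_θ` is injective on symmetric `Ω`:
pairing `Φ_θ Ω` with product vectors `η^{⊗ℓ}` gives, up to the factor `ℓ!`, the polynomial
`(θ·η)^(ℓ-r) q_Ω(η)`, and the polynomial `q_Ω` determines a symmetric `Ω`. Compactness of the
unit spheres in `θ` and in `Ω` then gives `‖Φ_θ Ω‖ ≥ c ‖Ω‖` uniformly in unit `θ`, so the pure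
states in question are the continuous image of a compact set of parameters `(θ, Ω)`.
-/

open scoped BigOperators ComplexOrder Matrix
attribute [local instance] Classical.propDecidable

noncomputable section

namespace RobustStein

variable {ι κ : Type*} [Fintype ι] [DecidableEq ι] [Fintype κ] [DecidableEq κ]

/-- A density matrix: positive semidefinite with unit trace. -/
def IsState (ρ : Matrix ι ι ℂ) : Prop := ρ.PosSemidef ∧ ρ.trace = 1

/-- Positive semidefinite square root (junk value `0` off the PSD cone). -/
def psdSqrt (M : Matrix ι ι ℂ) : Matrix ι ι ℂ := if h : M.PosSemidef then
    h.1.eigenvectorUnitary.1 * Matrix.diagonal ((↑) ∘ (√·) ∘ h.1.eigenvalues) *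
      (star h.1.eigenvectorUnitary : Matrix ι ι ℂ) else 0

/-- Trace norm `‖M‖₁ = tr √(MᴴM)`. -/
def traceNorm (M : Matrix ι ι ℂ) : ℝ := (psdSqrt (M.conjTranspose * M)).trace.re

/-- Fidelity `F(ρ,σ) = ‖√ρ√σ‖₁²`. -/
def fidelity (ρ σ : Matrix ι ι ℂ) : ℝ := traceNorm (psdSqrt ρ * psdSqrt σ) ^ 2

/-- Purified distance. -/
def purifiedDist (ρ σ : Matrix ι ι ℂ) : ℝ := Real.sqrt (1 - fidelity ρ σ)

/-- Matrix logarithm via functional calculus on the support (junk `0` off Hermitian). -/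
def matLog (M : Matrix ι ι ℂ) : Matrix ι ι ℂ :=
  if h : M.IsHermitian then h.cfc Real.log else 0

/-- Support inclusion `supp ρ ⊆ supp σ`, expressed as kernel inclusion. -/
def suppLE (ρ σ : Matrix ι ι ℂ) : Prop := ∀ v : ι → ℂ, σ.mulVec v = 0 → ρ.mulVec v = 0

/-- Umegaki relative entropy `D(ρ‖σ)`, equal to `+∞` when the support condition fails. -/
def relEnt (ρ σ : Matrix ι ι ℂ) : EReal :=
  if suppLE ρ σ then (((ρ * (matLog ρ - matLog σ)).trace.re : ℝ) : EReal) else ⊤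

/-- Relative entropy of resource `D(ρ‖M) = inf_{σ∈M} D(ρ‖σ)`. -/
def relEntSet (ρ : Matrix ι ι ℂ) (M : Set (Matrix ι ι ℂ)) : EReal := ⨅ σ ∈ M, relEnt ρ σ

/-- The set of type II error probabilities for tests with type I error at most ε. -/
def betaSet (ε : ℝ) (ρ σ : Matrix ι ι ℂ) : Set ℝ :=
  { b | ∃ X : Matrix ι ι ℂ, X.PosSemidef ∧ ((1 : Matrix ι ι ℂ) - X).PosSemidef ∧
        1 - ε ≤ ((ρ * X).trace).re ∧ b = ((σ * X).trace).re }

/-- Hypothesis testing relative entropy `D_H^ε(ρ‖σ) = - log min β`. -/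
def DH (ε : ℝ) (ρ σ : Matrix ι ι ℂ) : EReal :=
  if 0 < sInf (betaSet ε ρ σ) then ((- Real.log (sInf (betaSet ε ρ σ)) : ℝ) : EReal) else ⊤

/-- Hypothesis testing relative entropy between sets of states. -/
def DHSet (ε : ℝ) (A B : Set (Matrix ι ι ℂ)) : EReal := ⨅ ρ ∈ A, ⨅ σ ∈ B, DH ε ρ σ

/-- Max-relative entropy `D_max(ρ‖σ) = inf {λ : ρ ≤ e^λ σ}` (inf over empty set is `⊤`). -/
def Dmax (ρ σ : Matrix ι ι ℂ) : EReal :=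
  ⨅ (l : ℝ) (_ : (((Real.exp l : ℂ)) • σ - ρ).PosSemidef), (l : EReal)

/-- The ε-ball around ρ in purified distance. -/
def ball (ε : ℝ) (ρ : Matrix ι ι ℂ) : Set (Matrix ι ι ℂ) :=
  { ρ' | IsState ρ' ∧ purifiedDist ρ ρ' ≤ ε }

/-- Smooth max-relative entropy. -/
def DmaxSmooth (ε : ℝ) (ρ σ : Matrix ι ι ℂ) : EReal := ⨅ ρ' ∈ ball ε ρ, Dmax ρ' σ

/-- Smooth max-relative entropy between sets of states. -/
def DmaxSmoothSet (ε : ℝ) (A B : Set (Matrix ι ι ℂ)) : EReal :=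
  ⨅ ρ ∈ A, ⨅ σ ∈ B, DmaxSmooth ε ρ σ

/-- n-fold tensor (Kronecker) power `ρ^{⊗n}` on `H^{⊗n}` with index type `Fin n → κ`. -/
def tpow (ρ : Matrix κ κ ℂ) (n : ℕ) : Matrix (Fin n → κ) (Fin n → κ) ℂ :=
  Matrix.of fun x y => ∏ i, ρ (x i) (y i)

/-- Tensor product of operators on `H^{⊗n}` and `H^{⊗m}`. -/
def kron {n m : ℕ} (ρ : Matrix (Fin n → κ) (Fin n → κ) ℂ)
    (σ : Matrix (Fin m → κ) (Fin m → κ) ℂ) :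
    Matrix (Fin (n + m) → κ) (Fin (n + m) → κ) ℂ :=
  Matrix.of fun x y =>
    ρ (fun i => x (Fin.castAdd m i)) (fun i => y (Fin.castAdd m i)) *
    σ (fun j => x (Fin.natAdd n j)) (fun j => y (Fin.natAdd n j))

/-- Action of a permutation of the tensor factors: `π M π†`. -/
def permAct {n : ℕ} (π : Equiv.Perm (Fin n)) (M : Matrix (Fin n → κ) (Fin n → κ) ℂ) :
    Matrix (Fin n → κ) (Fin n → κ) ℂ :=
  Matrix.of fun x y => M (x ∘ π) (y ∘ π)

/-- Partial trace over the last tensor factor. -/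
def ptraceLast {n : ℕ} (M : Matrix (Fin (n + 1) → κ) (Fin (n + 1) → κ) ℂ) :
    Matrix (Fin n → κ) (Fin n → κ) ℂ :=
  Matrix.of fun x y => ∑ a : κ, M (Fin.snoc x a) (Fin.snoc y a)

/-- Partial trace over the last `k` tensor factors. -/
def ptraceRight (m k : ℕ) (M : Matrix (Fin (m + k) → κ) (Fin (m + k) → κ) ℂ) :
    Matrix (Fin m → κ) (Fin m → κ) ℂ :=
  Matrix.of fun x y => ∑ a : Fin k → κ, M (Fin.append x a) (Fin.append y a)

/-- Marginal of a state on `H^{⊗n}` on the `i`-th tensor factor. -/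
def marginalAt {n : ℕ} (i : Fin n) (M : Matrix (Fin n → κ) (Fin n → κ) ℂ) : Matrix κ κ ℂ :=
  Matrix.of fun a b => ∑ x : Fin n → κ, if x i = a then M x (Function.update x i b) else 0

/-- Replacer channel on the `i`-th tensor factor: `R_i^{(ω)}(M) = tr_i[M] ⊗_i ω`. -/
def replaceAt {n : ℕ} (i : Fin n) (ω : Matrix κ κ ℂ)
    (M : Matrix (Fin n → κ) (Fin n → κ) ℂ) : Matrix (Fin n → κ) (Fin n → κ) ℂ :=
  Matrix.of fun x y =>
    ω (x i) (y i) * ∑ a : κ, M (Function.update x i a) (Function.update y i a)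

/-- The partial trace over the `i`-th tensor factor vanishes. -/
def ptrAtZero {n : ℕ} (i : Fin n) (X : Matrix (Fin n → κ) (Fin n → κ) ℂ) : Prop :=
  ∀ x y : Fin n → κ, ∑ a : κ, X (Function.update x i a) (Function.update y i a) = 0

/-- Quantum Wasserstein distance of order 1. -/
def W1 {n : ℕ} (ω τ : Matrix (Fin n → κ) (Fin n → κ) ℂ) : ℝ :=
  sInf { c | ∃ X : Fin n → Matrix (Fin n → κ) (Fin n → κ) ℂ,
      (∀ i, (X i).IsHermitian) ∧ (∀ i, ptrAtZero i (X i)) ∧ ω - τ = ∑ i, X i ∧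
      c = (1 / 2) * ∑ i, traceNorm (X i) }

/-- Binary entropy (with natural logarithm). -/
def binEnt (x : ℝ) : ℝ := -(x * Real.log x) - (1 - x) * Real.log (1 - x)

/-- Smallest eigenvalue of a Hermitian matrix (junk `0` otherwise). -/
def lamMin (M : Matrix ι ι ℂ) : ℝ := if h : M.IsHermitian then ⨅ i, h.eigenvalues i else 0

/-- The family `V(H^{⊗n}, θ^{⊗m})` of vectors that are `θ` on `m` positions. -/
def vecSet (θ : κ → ℂ) (n m : ℕ) : Set ((Fin n → κ) → ℂ) :=
  { ψ | ∃ S : Finset (Fin n), S.card = m ∧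
      ∃ Ω : ({ j : Fin n // j ∉ S } → κ) → ℂ,
        ψ = fun x => (∏ i ∈ S, θ (x i)) * Ω (fun j => x j.1) }

/-- The support of the matrix ρ is contained in the span of `V`. -/
def suppInSpan (ρ : Matrix ι ι ℂ) (V : Set (ι → ℂ)) : Prop :=
  LinearMap.range (Matrix.toLin' ρ) ≤ Submodule.span ℂ V

/-- `θ ∈ H_A ⊗ H_E` is a (normalized) purification of `σ`. -/
def Purifies {dA dE : ℕ} (θ : Fin dA × Fin dE → ℂ) (σ : Matrix (Fin dA) (Fin dA) ℂ) : Prop :=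
  (∑ p, Complex.normSq (θ p)) = 1 ∧
  ∀ a b, (∑ e, θ (a, e) * (starRingEnd ℂ) (θ (b, e))) = σ a b

/-- Marginal on the A systems of a state on `(H_A ⊗ H_E)^{⊗n}`. -/
def margA {dA dE n : ℕ}
    (ρext : Matrix (Fin n → Fin dA × Fin dE) (Fin n → Fin dA × Fin dE) ℂ) :
    Matrix (Fin n → Fin dA) (Fin n → Fin dA) ℂ :=
  Matrix.of fun x y => ∑ e : Fin n → Fin dE,
    ρext (fun i => (x i, e i)) (fun i => (y i, e i))

/-- A generalized (n,r)-almost-iid state along `σA` (no permutation invariance required). -/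
def IsGenAlmostIID {dA : ℕ} (n r : ℕ) (σA : Matrix (Fin dA) (Fin dA) ℂ)
    (ρ : Matrix (Fin n → Fin dA) (Fin n → Fin dA) ℂ) : Prop :=
  IsState ρ ∧ ∃ (dE : ℕ) (θ : Fin dA × Fin dE → ℂ)
    (ρext : Matrix (Fin n → Fin dA × Fin dE) (Fin n → Fin dA × Fin dE) ℂ),
    Purifies θ σA ∧ IsState ρext ∧ margA ρext = ρ ∧
    suppInSpan ρext (vecSet θ n (n - r))

/-- An (n,r)-almost-iid state along `σA`. -/
def IsAlmostIID {dA : ℕ} (n r : ℕ) (σA : Matrix (Fin dA) (Fin dA) ℂ)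
    (ρ : Matrix (Fin n → Fin dA) (Fin n → Fin dA) ℂ) : Prop :=
  IsState ρ ∧ ∃ (dE : ℕ) (θ : Fin dA × Fin dE → ℂ)
    (ρext : Matrix (Fin n → Fin dA × Fin dE) (Fin n → Fin dA × Fin dE) ℂ),
    Purifies θ σA ∧ IsState ρext ∧
    (∀ π : Equiv.Perm (Fin n), ∀ x y, ρext (x ∘ π) (y ∘ π) = ρext x y) ∧
    margA ρext = ρ ∧
    suppInSpan ρext (vecSet θ n (n - r))

/-- The set `S^n(H, σ^{⊗(n-r)})` of (n,r)-almost-iid states along σ. -/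
def almostIIDSet (dA n r : ℕ) (σA : Matrix (Fin dA) (Fin dA) ℂ) :
    Set (Matrix (Fin n → Fin dA) (Fin n → Fin dA) ℂ) :=
  { ρ | IsAlmostIID n r σA ρ }

/-- The set `S̄^n(H, σ^{⊗(n-r)})` of generalized (n,r)-almost-iid states along σ. -/
def genAlmostIIDSet (dA n r : ℕ) (σA : Matrix (Fin dA) (Fin dA) ℂ) :
    Set (Matrix (Fin n → Fin dA) (Fin n → Fin dA) ℂ) :=
  { ρ | IsGenAlmostIID n r σA ρ }

/-- The Brandão–Plenio axioms for a family of sets of free states. -/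
structure BPAxioms (d : ℕ)
    (M : ∀ n : ℕ, Set (Matrix (Fin n → Fin d) (Fin n → Fin d) ℂ)) : Prop where
  states : ∀ n, ∀ ρ ∈ M n, IsState ρ
  convex : ∀ n, Convex ℝ (M n)
  closed : ∀ n, IsClosed (M n)
  full_rank : ∃ ω ∈ M 1, Matrix.PosDef ω
  perm : ∀ n (π : Equiv.Perm (Fin n)), ∀ ρ ∈ M n, permAct π ρ ∈ M n
  ptrace : ∀ n, ∀ ρ ∈ M (n + 1), ptraceLast ρ ∈ M n
  tensor : ∀ n m, ∀ ρ ∈ M n, ∀ σ ∈ M m, kron ρ σ ∈ M (n + m)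

/-- The tensor product `E ⊗ id_m` of a linear map on matrices with the identity. -/
def tensorId (E : Matrix ι ι ℂ →ₗ[ℂ] Matrix κ κ ℂ) (m : ℕ)
    (M : Matrix (ι × Fin m) (ι × Fin m) ℂ) : Matrix (κ × Fin m) (κ × Fin m) ℂ :=
  Matrix.of fun p q => E (Matrix.of fun a b => M (a, p.2) (b, q.2)) p.1 q.1

/-- Partial trace over the second (B) factor. -/
def ptraceB {dA dB : ℕ} (M : Matrix (Fin dA × Fin dB) (Fin dA × Fin dB) ℂ) :
    Matrix (Fin dA) (Fin dA) ℂ :=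
  Matrix.of fun a a' => ∑ b, M (a, b) (a', b)

/-- Partial trace over the first (A) factor. -/
def ptraceA {dA dB : ℕ} (M : Matrix (Fin dA × Fin dB) (Fin dA × Fin dB) ℂ) :
    Matrix (Fin dB) (Fin dB) ℂ :=
  Matrix.of fun b b' => ∑ a, M (a, b) (a, b')

section SymmetricTensors

def symmetricTensors (α β : Type*) : Submodule ℂ ((α → β) → ℂ) where
  carrier := {Ψ | ∀ π : Equiv.Perm α, ∀ x, Ψ (x ∘ π) = Ψ x}
  add_mem' hΨ hΦ π x := by simp only [Pi.add_apply, hΨ π x, hΦ π x]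
  zero_mem' _ _ := rfl
  smul_mem' c Ψ hΨ π x := by simp only [Pi.smul_apply, hΨ π x]

def symmetrize (α β : Type*) [Fintype α] [DecidableEq α] :
    ((α → β) → ℂ) →ₗ[ℂ] ((α → β) → ℂ) where
  toFun Ψ x := ∑ π : Equiv.Perm α, Ψ (x ∘ π)
  map_add' Ψ Φ := by ext x; simp only [Pi.add_apply, Finset.sum_add_distrib]
  map_smul' c Ψ := by
    ext x
    simp only [Pi.smul_apply, smul_eq_mul, Finset.mul_sum, RingHom.id_apply]

variable {α β : Type*} [Fintype α] [DecidableEq α]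

lemma symmetrize_apply (Ψ : (α → β) → ℂ) (x : α → β) :
    symmetrize α β Ψ x = ∑ π : Equiv.Perm α, Ψ (x ∘ π) := rfl

lemma symmetrize_eq_sum (Ψ : (α → β) → ℂ) :
    symmetrize α β Ψ = ∑ π : Equiv.Perm α, fun x => Ψ (x ∘ π) := by
  ext x
  simp [symmetrize_apply]

lemma symmetrize_mem (Ψ : (α → β) → ℂ) : symmetrize α β Ψ ∈ symmetricTensors α β :=
  fun σ _ => Fintype.sum_equiv (Equiv.mulLeft σ) _ _ fun _ => rfl

lemma symmetrize_eq_smul_of_mem {Ψ : (α → β) → ℂ} (hΨ : Ψ ∈ symmetricTensors α β) :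
    symmetrize α β Ψ = (Fintype.card (Equiv.Perm α) : ℂ) • Ψ := by
  ext x
  simp [symmetrize_apply, hΨ _ x]

lemma symmetrize_comp_perm (σ : Equiv.Perm α) (Ψ : (α → β) → ℂ) :
    symmetrize α β (fun x => Ψ (x ∘ σ)) = symmetrize α β Ψ := by
  ext x
  exact Fintype.sum_equiv (Equiv.mulRight σ) _ _ fun _ => rfl

lemma sum_symmetrize_mul_prod [Fintype β] (Ψ : (α → β) → ℂ) (η : β → ℂ) :
    ∑ x, symmetrize α β Ψ x * ∏ i, η (x i) =
      (Fintype.card (Equiv.Perm α) : ℂ) * ∑ x, Ψ x * ∏ i, η (x i) := by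
  have hperm (π : Equiv.Perm α) : ∑ x, Ψ (x ∘ π) * ∏ i, η (x i) = ∑ x, Ψ x * ∏ i, η (x i) :=
    Fintype.sum_equiv (Equiv.arrowCongr π.symm (Equiv.refl β)) _ _ fun x => by
      rw [← Equiv.prod_comp π fun i => η (x i)]; rfl
  simp only [symmetrize_apply, Finset.sum_mul]
  rw [Finset.sum_comm, Finset.sum_congr rfl fun π _ => hperm π]
  simp

end SymmetricTensors

section TensorOn

variable {α β : Type*}

/-- `θ^{⊗S} ⊗ Ω`: the vector `θ` on each tensor factor in `S`, and `Ω` on the remaining ones. -/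
def tensorOn (S : Finset α) (θ : β → ℂ) : (({j // j ∉ S} → β) → ℂ) →ₗ[ℂ] ((α → β) → ℂ) where
  toFun Ω x := (∏ i ∈ S, θ (x i)) * Ω (fun j => x j)
  map_add' Ω Ω' := by ext x; simp only [Pi.add_apply, mul_add]
  map_smul' c Ω := by ext x; simp only [Pi.smul_apply, smul_eq_mul, RingHom.id_apply]; ring

lemma tensorOn_apply (S : Finset α) (θ : β → ℂ) (Ω : ({j // j ∉ S} → β) → ℂ) (x : α → β) :
    tensorOn S θ Ω x = (∏ i ∈ S, θ (x i)) * Ω (fun j => x j) := rfl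

lemma vecSet_eq (θ : β → ℂ) (n m : ℕ) :
    vecSet θ n m = {ψ | ∃ S : Finset (Fin n), S.card = m ∧ ∃ Ω, ψ = tensorOn S θ Ω} := rfl

lemma tensorOn_relabel (θ : β → ℂ) {S S' : Finset α} (τ : Equiv.Perm α)
    (h : ∀ i, τ i ∈ S' ↔ i ∈ S) (Ω : ({j // j ∉ S} → β) → ℂ) :
    tensorOn S' θ (fun v => Ω fun k => v ⟨τ k, mt (h k).1 k.2⟩) =
      fun x => tensorOn S θ Ω (x ∘ τ) := by
  ext x
  simp only [tensorOn_apply, Function.comp_apply]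
  congr 1
  exact (Finset.prod_nbij τ (fun i hi => (h i).2 hi) (τ.injective.injOn)
    (fun j hj => ⟨τ.symm j, (h _).1 (by simpa using hj), by simp⟩) fun _ _ => rfl).symm

variable [Fintype α] [DecidableEq α]

lemma symmetrize_tensorOn_relabel (θ : β → ℂ) {S S' : Finset α} (τ : Equiv.Perm α)
    (h : ∀ i, τ i ∈ S' ↔ i ∈ S) (Ω : ({j // j ∉ S} → β) → ℂ) :
    symmetrize α β (tensorOn S' θ (fun v => Ω fun k => v ⟨τ k, mt (h k).1 k.2⟩)) =
      symmetrize α β (tensorOn S θ Ω) := by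
  rw [tensorOn_relabel θ τ h Ω, symmetrize_comp_perm]

lemma symmetrize_tensorOn_symmetrize (S : Finset α) (θ : β → ℂ)
    (Ω : ({j // j ∉ S} → β) → ℂ) :
    symmetrize α β (tensorOn S θ (symmetrize _ β Ω)) =
      (Fintype.card (Equiv.Perm {j // j ∉ S}) : ℂ) • symmetrize α β (tensorOn S θ Ω) := by
  have hterm (e : Equiv.Perm {j // j ∉ S}) :
      symmetrize α β (tensorOn S θ fun v => Ω (v ∘ e)) = symmetrize α β (tensorOn S θ Ω) := by
    have h (i : α) : Equiv.Perm.ofSubtype e i ∈ S ↔ i ∈ S := by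
      by_cases hi : i ∈ S
      · simp [Equiv.Perm.ofSubtype_apply_of_not_mem e (not_not.2 hi), hi]
      · have he := (e ⟨i, hi⟩).2
        rw [← Equiv.Perm.ofSubtype_apply_coe] at he
        simpa [hi] using he
    convert symmetrize_tensorOn_relabel θ (Equiv.Perm.ofSubtype e) h Ω using 4 with v
    congr 1
    ext k
    simp [Equiv.Perm.ofSubtype_apply_coe]
  rw [symmetrize_eq_sum Ω, map_sum, map_sum, Finset.sum_congr rfl fun e _ => hterm e,
    Finset.sum_const, Finset.card_univ, ← Nat.cast_smul_eq_nsmul ℂ]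

lemma continuous_symmetrize_tensorOn (S : Finset α) :
    Continuous fun p : (β → ℂ) × (({j // j ∉ S} → β) → ℂ) =>
      symmetrize α β (tensorOn S p.1 p.2) := by
  refine continuous_pi fun x => ?_
  simp only [symmetrize_apply, tensorOn_apply]
  fun_prop

end TensorOn

section Span

variable {α β : Type*}

lemma exists_perm_mem_iff_of_card_eq [DecidableEq α] {S S' : Finset α} (h : S.card = S'.card) :
    ∃ τ : Equiv.Perm α, ∀ i, τ i ∈ S' ↔ i ∈ S := by
  have := Set.powersetCard.isPretransitive (α := α) (n := S.card)
  obtain ⟨τ, hτ⟩ := MulAction.exists_smul_eq (Equiv.Perm α)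
    (⟨S, rfl⟩ : Set.powersetCard α S.card) ⟨S', h.symm⟩
  have hτS : S.image τ = S' := by
    simpa [Finset.smul_finset_def, Equiv.Perm.smul_def] using congrArg Subtype.val hτ
  refine ⟨τ, fun i => ?_⟩
  simp [← hτS]

theorem symmetricTensors_inf_span_vecSet {n m : ℕ} {S : Finset (Fin n)} (hS : S.card = m)
    (θ : β → ℂ) :
    symmetricTensors (Fin n) β ⊓ Submodule.span ℂ (vecSet θ n m) =
      (symmetricTensors _ β).map ((symmetrize (Fin n) β).comp (tensorOn S θ)) := by
  set M := (symmetricTensors _ β).map ((symmetrize (Fin n) β).comp (tensorOn S θ))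
  apply le_antisymm
  · rintro Ψ ⟨hsym, hspan⟩
    have hV : Submodule.span ℂ (vecSet θ n m) ≤ M.comap (symmetrize _ β) := by
      rw [Submodule.span_le, vecSet_eq]
      rintro _ ⟨S', hS', Ω', rfl⟩
      obtain ⟨τ, hτ⟩ := exists_perm_mem_iff_of_card_eq (hS'.trans hS.symm)
      rw [SetLike.mem_coe, Submodule.mem_comap, ← symmetrize_tensorOn_relabel θ τ hτ Ω']
      have hN : (Fintype.card (Equiv.Perm {j // j ∉ S}) : ℂ) ≠ 0 := by positivity
      rw [← Submodule.smul_mem_iff M hN, ← symmetrize_tensorOn_symmetrize]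
      exact Submodule.mem_map_of_mem (symmetrize_mem _)
    have hΨ := hV hspan
    rwa [Submodule.mem_comap, symmetrize_eq_smul_of_mem hsym,
      Submodule.smul_mem_iff M (by positivity)] at hΨ
  · rintro _ ⟨Ω, -, rfl⟩
    refine ⟨symmetrize_mem _, ?_⟩
    rw [LinearMap.comp_apply, symmetrize_eq_sum]
    refine Submodule.sum_mem _ fun π _ => Submodule.subset_span ?_
    rw [← tensorOn_relabel θ π (S' := S.map π.toEmbedding) (by simp) Ω, vecSet_eq]
    exact ⟨_, (Finset.card_map _).trans hS, _, rfl⟩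

end Span

section Polarization

open MvPolynomial

variable {γ β : Type*} [Fintype γ]

lemma exists_perm_of_sum_single_eq {v w : γ → β}
    (h : ∑ j, Finsupp.single (v j) 1 = ∑ j, Finsupp.single (w j) (1 : ℕ)) :
    ∃ e : Equiv.Perm γ, v = w ∘ e := by
  have hfiber (b : β) : Fintype.card {j // v j = b} = Fintype.card {j // w j = b} := by
    have hb := congrArg (· b) h
    simpa [Finsupp.finsetSum_apply, Finsupp.single_apply, Fintype.card_subtype,
      Finset.sum_boole, eq_comm] using hb
  exact ⟨Equiv.ofFiberEquiv fun b => Fintype.equivOfCardEq (hfiber b),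
    funext fun a => (Equiv.ofFiberEquiv_map _ a).symm⟩

variable [DecidableEq γ] [Fintype β]

def tensorPoly (Ω : (γ → β) → ℂ) : MvPolynomial β ℂ :=
  ∑ v, C (Ω v) * ∏ j, X (v j)

lemma eval_tensorPoly (Ω : (γ → β) → ℂ) (η : β → ℂ) :
    eval η (tensorPoly Ω) = ∑ v, Ω v * ∏ j, η (v j) := by
  simp [tensorPoly, map_prod]

lemma coeff_tensorPoly (Ω : (γ → β) → ℂ) (v₀ : γ → β) :
    coeff (∑ j, Finsupp.single (v₀ j) 1) (tensorPoly Ω) =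
      ∑ v with ∑ j, Finsupp.single (v j) 1 = ∑ j, Finsupp.single (v₀ j) 1, Ω v := by
  simp only [tensorPoly, coeff_sum, coeff_C_mul, X, ← monomial_sum_one, coeff_monomial,
    mul_ite, mul_one, mul_zero, Finset.sum_filter]

lemma eq_zero_of_tensorPoly_eq_zero {Ω : (γ → β) → ℂ} (hΩ : Ω ∈ symmetricTensors γ β)
    (h : tensorPoly Ω = 0) : Ω = 0 := by
  ext v₀
  -- The coefficient of the monomial of `v₀` is `Ω v₀` times the size of the orbit of `v₀`.
  have hcoeff := coeff_tensorPoly Ω v₀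
  rw [h, coeff_zero, Finset.sum_congr rfl fun v hv => ?_, Finset.sum_const, nsmul_eq_mul]
    at hcoeff
  · refine (mul_eq_zero.1 hcoeff.symm).resolve_left ?_
    exact Nat.cast_ne_zero.2
      (Finset.card_ne_zero_of_mem (Finset.mem_filter.2 ⟨Finset.mem_univ _, rfl⟩))
  · obtain ⟨e, rfl⟩ := exists_perm_of_sum_single_eq (Finset.mem_filter.1 hv).2
    exact hΩ e v₀

end Polarization

section Injectivity

variable {α β : Type*} [Fintype α] [DecidableEq α] [Fintype β]

lemma sum_tensorOn_mul_prod (S : Finset α) (θ : β → ℂ) (Ω : ({j // j ∉ S} → β) → ℂ)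
    (η : β → ℂ) :
    ∑ x, tensorOn S θ Ω x * ∏ i, η (x i) =
      (∑ a, θ a * η a) ^ S.card * ∑ v, Ω v * ∏ j, η (v j) := by
  have hsplit (x : α → β) : tensorOn S θ Ω x * ∏ i, η (x i) =
      (∏ i : {i // i ∈ S}, θ (x i) * η (x i)) *
        (Ω (fun j => x j) * ∏ j : {j // j ∉ S}, η (x j)) := by
    rw [tensorOn_apply, ← Finset.prod_mul_prod_compl S (fun i => η (x i)),
      Finset.prod_subtype Sᶜ (fun _ => Finset.mem_compl) (fun i => η (x i)),
      ← Finset.prod_subtype S (fun _ => Iff.rfl) (fun i => θ (x i) * η (x i)),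
      Finset.prod_mul_distrib]
    ring
  rw [Finset.sum_congr rfl fun x _ => hsplit x,
    Fintype.sum_equiv (Equiv.piEquivPiSubtypeProd (· ∈ S) fun _ => β)
      (fun x => (∏ i : {i // i ∈ S}, θ (x i) * η (x i)) *
        (Ω (fun j => x j) * ∏ j : {j // j ∉ S}, η (x j)))
      (fun p => (∏ i, θ (p.1 i) * η (p.1 i)) * (Ω p.2 * ∏ j, η (p.2 j))) fun _ => rfl,
    Fintype.sum_prod_type]
  dsimp only
  rw [← Finset.sum_mul_sum]
  congr 1
  rw [← Fintype.card_coe S, ← Finset.card_univ, ← Finset.prod_const, Fintype.prod_sum]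

open MvPolynomial in
lemma eq_zero_of_symmetrize_tensorOn_eq_zero {S : Finset α} {θ : β → ℂ} (hθ : θ ≠ 0)
    {Ω : ({j // j ∉ S} → β) → ℂ} (hΩ : Ω ∈ symmetricTensors _ β)
    (h : symmetrize α β (tensorOn S θ Ω) = 0) : Ω = 0 := by
  set p : MvPolynomial β ℂ := ∑ a, C (θ a) * X a
  have hp : p ≠ 0 := by
    obtain ⟨a, ha⟩ := Function.ne_iff.1 hθ
    intro hp0
    have := congrArg (coeff (Finsupp.single a 1)) hp0
    simp [p, coeff_sum, coeff_C_mul, coeff_X, Finsupp.single_left_inj one_ne_zero] at this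
    exact ha this
  have hpq : p ^ S.card * tensorPoly Ω = 0 := MvPolynomial.funext fun η => by
    have := congrArg (fun Ψ => ∑ x, Ψ x * ∏ i, η (x i)) h
    simp only [sum_symmetrize_mul_prod, sum_tensorOn_mul_prod, Pi.zero_apply, zero_mul,
      Finset.sum_const_zero] at this
    simpa [p, eval_tensorPoly] using this
  exact eq_zero_of_tensorPoly_eq_zero hΩ ((mul_eq_zero.1 hpq).resolve_left (pow_ne_zero _ hp))

end Injectivity

section Compactness

variable {𝕜 X E F : Type*} [RCLike 𝕜] [TopologicalSpace X] [NormedAddCommGroup E]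
  [NormedSpace 𝕜 E] [FiniteDimensional 𝕜 E] [NormedAddCommGroup F] [NormedSpace 𝕜 F]

lemma exists_pos_mul_norm_le_of_injOn {T : Set X} (hT : IsCompact T) (W : Submodule 𝕜 E)
    (Φ : X → E →ₗ[𝕜] F) (hΦ : Continuous fun p : X × E => Φ p.1 p.2)
    (hinj : ∀ x ∈ T, ∀ v ∈ W, Φ x v = 0 → v = 0) :
    ∃ c > 0, ∀ x ∈ T, ∀ v ∈ W, c * ‖v‖ ≤ ‖Φ x v‖ := by
  have := FiniteDimensional.proper_rclike 𝕜 E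
  have hK : IsCompact (T ×ˢ ((W : Set E) ∩ Metric.sphere 0 1)) :=
    hT.prod ((isCompact_sphere 0 1).inter_left W.closed_of_finiteDimensional)
  obtain ⟨c, hc, hcK⟩ := hK.exists_forall_le' hΦ.norm.continuousOn fun p hp =>
    norm_pos_iff.2 fun h0 => by
      simpa [hinj p.1 hp.1 p.2 hp.2.1 h0] using hp.2.2
  refine ⟨c, hc, fun x hx v hv => ?_⟩
  rcases eq_or_ne v 0 with rfl | hv0
  · simp
  have hvn : 0 < ‖v‖ := norm_pos_iff.2 hv0
  have hu := hcK (x, ((‖v‖⁻¹ : ℝ) : 𝕜) • v)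
    ⟨hx, W.smul_mem _ hv, by simp [norm_smul, hvn.ne']⟩
  rw [map_smul, norm_smul, RCLike.norm_ofReal, abs_of_pos (inv_pos.2 hvn)] at hu
  rw [mul_comm]
  exact (le_inv_mul_iff₀ hvn).1 hu

lemma isCompact_setOf_mem_of_injOn {T : Set X} (hT : IsCompact T) (W : Submodule 𝕜 E)
    (Φ : X → E →ₗ[𝕜] F) (hΦ : Continuous fun p : X × E => Φ p.1 p.2)
    (hinj : ∀ x ∈ T, ∀ v ∈ W, Φ x v = 0 → v = 0) {A : Set F} (hA : IsCompact A) :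
    IsCompact {p : X × E | p.1 ∈ T ∧ p.2 ∈ W ∧ Φ p.1 p.2 ∈ A} := by
  obtain ⟨c, hc, hlow⟩ := exists_pos_mul_norm_le_of_injOn hT W Φ hΦ hinj
  obtain ⟨R, hR⟩ := hA.isBounded.subset_closedBall 0
  have := FiniteDimensional.proper_rclike 𝕜 E
  convert (hT.prod ((isCompact_closedBall (0 : E) (R / c)).inter_left
    W.closed_of_finiteDimensional)).inter_right (hA.isClosed.preimage hΦ) using 1
  ext ⟨x, v⟩
  simp only [Set.mem_inter_iff, Set.mem_prod, Set.mem_preimage,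
    SetLike.mem_coe, mem_closedBall_zero_iff]
  constructor
  · rintro ⟨hx, hv, hΦA⟩
    exact ⟨⟨hx, hv, (le_div_iff₀' hc).2
      ((hlow x hx v hv).trans (mem_closedBall_zero_iff.1 (hR hΦA)))⟩, hΦA⟩
  · rintro ⟨⟨hx, hv, -⟩, hΦA⟩
    exact ⟨hx, hv, hΦA⟩

end Compactness

section UnitVectors

variable {β : Type*} [Fintype β]

def unitVectors (β : Type*) [Fintype β] : Set (β → ℂ) := {v | ∑ a, Complex.normSq (v a) = 1}

lemma ne_zero_of_mem_unitVectors {v : β → ℂ} (hv : v ∈ unitVectors β) : v ≠ 0 := by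
  rintro rfl
  simp [unitVectors] at hv

lemma norm_le_one_of_mem_unitVectors {v : β → ℂ} (hv : v ∈ unitVectors β) : ‖v‖ ≤ 1 := by
  refine (pi_norm_le_iff_of_nonneg zero_le_one).2 fun a => ?_
  rw [← sq_le_one_iff₀ (norm_nonneg _), ← Complex.normSq_eq_norm_sq, ← hv]
  exact Finset.single_le_sum (fun b _ => Complex.normSq_nonneg (v b)) (Finset.mem_univ a)

lemma isCompact_unitVectors : IsCompact (unitVectors β) :=
  Metric.isCompact_of_isClosed_isBounded (isClosed_eq (by fun_prop) continuous_const)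
    ((Metric.isBounded_closedBall (x := 0) (r := 1)).subset fun _ hv =>
      mem_closedBall_zero_iff.2 (norm_le_one_of_mem_unitVectors hv))

end UnitVectors

theorem pure_almost_iid_set_compact_general
    (dK ℓ r : ℕ) :
    IsCompact { P : Matrix (Fin ℓ → Fin dK) (Fin ℓ → Fin dK) ℂ |
      ∃ (θ : Fin dK → ℂ) (Ψ : (Fin ℓ → Fin dK) → ℂ),
        (∑ a, Complex.normSq (θ a)) = 1 ∧ (∑ x, Complex.normSq (Ψ x)) = 1 ∧
        (∀ π : Equiv.Perm (Fin ℓ), ∀ x, Ψ (x ∘ π) = Ψ x) ∧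
        Ψ ∈ Submodule.span ℂ (vecSet θ ℓ (ℓ - r)) ∧
        P = Matrix.of fun x y => Ψ x * (starRingEnd ℂ) (Ψ y) } := by
  obtain ⟨S, -, hS⟩ :=
    Finset.exists_subset_card_eq (s := (Finset.univ : Finset (Fin ℓ))) (n := ℓ - r) (by simp)
  let Φ θ := (symmetrize (Fin ℓ) (Fin dK)).comp (tensorOn S θ)
  have hΦ : Continuous fun p : _ × _ => Φ p.1 p.2 := continuous_symmetrize_tensorOn S
  have hparam := isCompact_setOf_mem_of_injOn isCompact_unitVectors (symmetricTensors _ _) Φ hΦ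
    (fun θ hθ _ hΩ => eq_zero_of_symmetrize_tensorOn_eq_zero (ne_zero_of_mem_unitVectors hθ) hΩ)
    isCompact_unitVectors
  convert hparam.image
    (f := fun p => Matrix.of fun x y => Φ p.1 p.2 x * (starRingEnd ℂ) (Φ p.1 p.2 y))
    (continuous_matrix fun x y => by fun_prop) using 1
  ext P
  constructor
  · rintro ⟨θ, Ψ, hθ, hΨ, hsym, hspan, rfl⟩
    obtain ⟨Ω, hΩ, rfl⟩ := (symmetricTensors_inf_span_vecSet hS θ).le ⟨hsym, hspan⟩
    exact ⟨(θ, Ω), ⟨hθ, hΩ, hΨ⟩, rfl⟩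
  · rintro ⟨⟨θ, Ω⟩, ⟨hθ, hΩ, hΨ⟩, rfl⟩
    obtain ⟨hsym, hspan⟩ := (symmetricTensors_inf_span_vecSet hS θ).ge ⟨Ω, hΩ, rfl⟩
    exact ⟨θ, _, hθ, hΨ, hsym, hspan, rfl⟩

/-- **Compactness of the set of pure almost-iid density matrices**: the set of
rank-one projections onto unit vectors lying in `Sym^ℓ(K) ∩ span V(K^{⊗ℓ}, θ^{⊗(ℓ−r)})`
for some unit vector θ is compact. -/
theorem pure_almost_iid_set_compact
    (dK ℓ r : ℕ) (hr : r ≤ ℓ) :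
    IsCompact { P : Matrix (Fin ℓ → Fin dK) (Fin ℓ → Fin dK) ℂ |
      ∃ (θ : Fin dK → ℂ) (Ψ : (Fin ℓ → Fin dK) → ℂ),
        (∑ a, Complex.normSq (θ a)) = 1 ∧ (∑ x, Complex.normSq (Ψ x)) = 1 ∧
        (∀ π : Equiv.Perm (Fin ℓ), ∀ x, Ψ (x ∘ π) = Ψ x) ∧
        Ψ ∈ Submodule.span ℂ (vecSet θ ℓ (ℓ - r)) ∧
        P = Matrix.of fun x y => Ψ x * (starRingEnd ℂ) (Ψ y) } :=
  pure_almost_iid_set_compact_general dK ℓ r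

end RobustStein
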